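/- Let X be a real Banach space, let K : X×X → ℝ be a kernel satisfying conditions (1)–(5) below, and let f : X → ℝ ∪ {+∞} be proper, lower semicontinuous and bounded below. If 0 < α ≤ 1, c_K is Fréchet differentiable with derivative α-Hölder continuous on every bounded subset of X, and c_K is strongly coercive (c_K(x)/‖x‖ → +∞ as ‖x‖ → ∞), then for every n ∈ ℕ the function Δ_{K,n} f is Fréchet differentiable with derivative α-Hölder continuous on every bounded subset of X. -/

import Mathlib

/-!
Write `g = I_{K,n} f + n c_K` and `ψ = co g`, so that `Δ_{K,n} f = ψ - n c_K`. Since `d_K(·, y)` is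
convex, every second difference of `g` is bounded by the corresponding one of `2 n c_K`, which is
`O(‖h‖^(1+α))` locally because `Dc_K` is `α`-Hölder. Testing `ψ(x ± h)` with the translates of a
near-optimal convex combination for `ψ(x)` transfers this bound to `ψ`. To make it uniform on
bounded sets, coercivity of `c_K` is used: `m + n c_K` is a superlinear convex minorant of `g`, so
far-away points of a near-optimal combination carry little weight and can be discarded. Finally, a
convex function whose second differences are `O(‖h‖^(1+α))` is differentiable (any subgradient is
the derivative), with `α`-Hölder derivative.
-/

open scoped BigOperators

/-- The convex envelope of a function `h : X → ℝ`, given by the infimum over all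
finite convex combinations. -/
noncomputable def convEnv {X : Type*} [NormedAddCommGroup X] [NormedSpace ℝ X]
    (h : X → ℝ) (x : X) : ℝ :=
  sInf { r : ℝ | ∃ (m : ℕ) (l : Fin m → ℝ) (z : Fin m → X),
    (∀ i, 0 < l i) ∧ ∑ i, l i = 1 ∧ ∑ i, l i • z i = x ∧ ∑ i, l i * h (z i) = r }

/-- The inf-convolution `I_{K,n} f (x) = inf_y ( f(y) + n K(x,y) )` for `f` with values
in `ℝ ∪ {+∞} ⊆ EReal`. -/
noncomputable def infConvK {X : Type*} [NormedAddCommGroup X]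
    (K : X → X → ℝ) (f : X → EReal) (n : ℕ) (x : X) : EReal :=
  ⨅ y, f y + (((n : ℝ) * K x y : ℝ) : EReal)

/-- `Δ_{K,n} f = co( I_{K,n} f + n c_K ) − n c_K`. -/
noncomputable def DeltaK {X : Type*} [NormedAddCommGroup X] [NormedSpace ℝ X]
    (K : X → X → ℝ) (cK : X → ℝ) (f : X → EReal) (n : ℕ) (x : X) : ℝ :=
  convEnv (fun z => (infConvK K f n z).toReal + (n : ℝ) * cK z) x - (n : ℝ) * cK x

open Metric Set Filter Topology Asymptotics
open scoped NNReal

section Regularity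

variable {X : Type*} [NormedAddCommGroup X] [NormedSpace ℝ X]

def HolderFDerivOnBounded (α : ℝ) (F : X → ℝ) : Prop :=
  ∀ r : ℝ, 0 < r → ∃ L : ℝ, 0 < L ∧ ∀ x y : X, ‖x‖ ≤ r → ‖y‖ ≤ r →
    ‖fderiv ℝ F x - fderiv ℝ F y‖ ≤ L * ‖x - y‖ ^ α

def SecondDiffHolderOnBounded (α : ℝ) (σ : X → ℝ) : Prop :=
  ∀ r : ℝ, ∃ C : ℝ, 0 ≤ C ∧ ∀ x h : X, ‖x‖ ≤ r → ‖h‖ ≤ 1 →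
    σ (x + h) + σ (x - h) - 2 * σ x ≤ C * ‖h‖ ^ (1 + α)

lemma HolderFDerivOnBounded.sub_const_mul {α : ℝ} {F G : X → ℝ} (hF : Differentiable ℝ F)
    (hG : Differentiable ℝ G) (hF' : HolderFDerivOnBounded α F)
    (hG' : HolderFDerivOnBounded α G) (c : ℝ) :
    HolderFDerivOnBounded α (fun x => F x - c * G x) := by
  intro r hr
  obtain ⟨L₁, hL₁, hF'⟩ := hF' r hr
  obtain ⟨L₂, hL₂, hG'⟩ := hG' r hr
  have hderiv : ∀ x, fderiv ℝ (fun x => F x - c * G x) x = fderiv ℝ F x - c • fderiv ℝ G x :=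
    fun x => ((hF x).hasFDerivAt.sub ((hG x).hasFDerivAt.const_mul c)).fderiv
  refine ⟨L₁ + |c| * L₂, by positivity, fun x y hx hy => ?_⟩
  rw [hderiv, hderiv]
  calc ‖fderiv ℝ F x - c • fderiv ℝ G x - (fderiv ℝ F y - c • fderiv ℝ G y)‖
      = ‖(fderiv ℝ F x - fderiv ℝ F y) - c • (fderiv ℝ G x - fderiv ℝ G y)‖ := by
        rw [smul_sub]; abel_nf
    _ ≤ ‖fderiv ℝ F x - fderiv ℝ F y‖ + |c| * ‖fderiv ℝ G x - fderiv ℝ G y‖ := by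
        rw [← Real.norm_eq_abs, ← norm_smul]; exact norm_sub_le _ _
    _ ≤ L₁ * ‖x - y‖ ^ α + |c| * (L₂ * ‖x - y‖ ^ α) := by
        gcongr
        exacts [hF' x y hx hy, hG' x y hx hy]
    _ = (L₁ + |c| * L₂) * ‖x - y‖ ^ α := by ring

lemma abs_sub_sub_fderiv_le {F : X → ℝ} (hF : Differentiable ℝ F) {R L α : ℝ} (hα : 0 ≤ α)
    (hL0 : 0 ≤ L)
    (hL : ∀ x y : X, ‖x‖ ≤ R → ‖y‖ ≤ R → ‖fderiv ℝ F x - fderiv ℝ F y‖ ≤ L * ‖x - y‖ ^ α)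
    {z u : X} (hz : ‖z‖ ≤ R) (hzu : ‖z + u‖ ≤ R) :
    |F (z + u) - F z - fderiv ℝ F z u| ≤ L * ‖u‖ ^ (1 + α) := by
  have hseg : segment ℝ z (z + u) ⊆ closedBall 0 R :=
    (convex_closedBall 0 R).segment_subset (mem_closedBall_zero_iff.2 hz)
      (mem_closedBall_zero_iff.2 hzu)
  have bound : ∀ w ∈ segment ℝ z (z + u), ‖fderiv ℝ F w - fderiv ℝ F z‖ ≤ L * ‖u‖ ^ α := by
    intro w hw
    have hwz : ‖w - z‖ ≤ ‖u‖ := by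
      rw [segment_eq_image'] at hw
      obtain ⟨θ, ⟨hθ0, hθ1⟩, rfl⟩ := hw
      simp only [add_sub_cancel_left, norm_smul, Real.norm_of_nonneg hθ0]
      exact mul_le_of_le_one_left (norm_nonneg _) hθ1
    exact (hL w z (mem_closedBall_zero_iff.1 (hseg hw)) hz).trans (by gcongr)
  have := (convex_segment z (z + u)).norm_image_sub_le_of_norm_fderiv_le' (fun w _ => hF w)
    bound (left_mem_segment ℝ z (z + u)) (right_mem_segment ℝ z (z + u))
  rw [add_sub_cancel_left, Real.norm_eq_abs] at this
  rw [Real.rpow_add' (norm_nonneg u) (by positivity), Real.rpow_one]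
  linarith

lemma HolderFDerivOnBounded.secondDiffHolderOnBounded {α : ℝ} {F : X → ℝ}
    (hF : Differentiable ℝ F) (hα : 0 ≤ α) (hF' : HolderFDerivOnBounded α F) :
    SecondDiffHolderOnBounded α F := by
  intro r
  obtain ⟨L, hL, hLb⟩ := hF' (|r| + 1) (by positivity)
  refine ⟨2 * L, by positivity, fun x h hx hh => ?_⟩
  have hx' : ‖x‖ ≤ |r| + 1 := by linarith [le_abs_self r]
  have hplus := abs_sub_sub_fderiv_le hF hα hL.le hLb hx' (u := h)
    (by linarith [norm_add_le x h, le_abs_self r])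
  have hminus := abs_sub_sub_fderiv_le hF hα hL.le hLb hx' (u := -h)
    (by linarith [norm_add_le x (-h), norm_neg h, le_abs_self r])
  rw [norm_neg, map_neg, ← sub_eq_add_neg] at hminus
  linarith [(abs_le.1 hplus).2, (abs_le.1 hminus).2]

lemma HolderFDerivOnBounded.exists_le {α : ℝ} {F : X → ℝ} (hF : Differentiable ℝ F)
    (hα : 0 ≤ α) (hF' : HolderFDerivOnBounded α F) (ρ : ℝ) :
    ∃ B, ∀ z : X, ‖z‖ ≤ ρ → F z ≤ B := by
  obtain ⟨L, hL, hLb⟩ := hF' (|ρ| + 1) (by positivity)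
  refine ⟨F 0 + ‖fderiv ℝ F 0‖ * |ρ| + L * (|ρ| + 1) ^ (1 + α), fun z hz => ?_⟩
  have hz' : ‖z‖ ≤ |ρ| + 1 := by linarith [le_abs_self ρ]
  have htaylor := abs_sub_sub_fderiv_le hF hα hL.le hLb (z := 0) (u := z) (by simp; positivity)
    (by rwa [zero_add])
  rw [zero_add] at htaylor
  have h1 : fderiv ℝ F 0 z ≤ ‖fderiv ℝ F 0‖ * |ρ| :=
    (le_abs_self _).trans (((fderiv ℝ F 0).le_opNorm z).trans (by gcongr; linarith [le_abs_self ρ]))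
  have h2 : L * ‖z‖ ^ (1 + α) ≤ L * (|ρ| + 1) ^ (1 + α) := by gcongr
  linarith [(abs_le.1 htaylor).2]

end Regularity

lemma isLittleO_norm_rpow_one_add {X : Type*} [NormedAddCommGroup X] {α : ℝ} (hα : 0 < α) :
    (fun h : X => ‖h‖ ^ (1 + α)) =o[𝓝 0] fun h => h := by
  have hsmall : (fun h : X => ‖h‖ ^ α) =o[𝓝 0] fun _ => (1 : ℝ) := by
    rw [isLittleO_one_iff]
    simpa [Real.zero_rpow hα.ne'] using
      ((continuous_norm.tendsto (0 : X)).rpow_const (Or.inr hα.le))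
  refine ((hsmall.mul_isBigO (isBigO_refl (fun h : X => ‖h‖) _)).congr (fun h => ?_)
    (fun h => one_mul _)).trans_isBigO (isBigO_norm_left.2 (isBigO_refl _ _))
  rw [Real.rpow_add' (norm_nonneg h) (by positivity), Real.rpow_one, mul_comm]

lemma continuous_of_lipschitzOnWith_ball {X : Type*} [NormedAddCommGroup X] {σ : X → ℝ}
    (hlip : ∀ ρ, ∃ ℓ : ℝ≥0, LipschitzOnWith ℓ σ (ball 0 ρ)) : Continuous σ :=
  continuous_iff_continuousAt.2 fun x => by
    obtain ⟨ℓ, hℓ⟩ := hlip (‖x‖ + 1)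
    exact hℓ.continuousOn.continuousAt (isOpen_ball.mem_nhds (by simp))

section ConvexRegularity

variable {X : Type*} [NormedAddCommGroup X] [NormedSpace ℝ X]

lemma ConvexOn.exists_subgradient {σ : X → ℝ} (hσ : ConvexOn ℝ univ σ) (hc : Continuous σ)
    (x : X) : ∃ p : X →L[ℝ] ℝ, ∀ z, σ x + p (z - x) ≤ σ z := by
  -- separate `(x, σ x)` from the open convex strict epigraph `S`
  set S : Set (X × ℝ) := {q | σ q.1 < q.2}
  have hSconv : Convex ℝ S := by
    have hG : ConvexOn ℝ univ (fun q : X × ℝ => σ q.1 - q.2) :=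
      (hσ.comp_linearMap (LinearMap.fst ℝ X ℝ)).sub ((LinearMap.snd ℝ X ℝ).concaveOn convex_univ)
    simpa [sub_neg] using hG.convex_lt 0
  have hSopen : IsOpen S := isOpen_lt (hc.comp continuous_fst) continuous_snd
  obtain ⟨F, hF⟩ := geometric_hahn_banach_open_point hSconv hSopen (by simp [S] : (x, σ x) ∉ S)
  set φ : X →L[ℝ] ℝ := F.comp (ContinuousLinearMap.inl ℝ X ℝ)
  set c : ℝ := F (0, 1)
  have hF_apply : ∀ z t, F (z, t) = φ z + t * c := fun z t => by
    rw [show ((z, t) : X × ℝ) = (z, 0) + t • (0, 1) by simp, map_add, map_smul, smul_eq_mul,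
      mul_comm]
    rfl
  have hc : c < 0 := by
    have := hF (x, σ x + 1) (by simp [S])
    rw [hF_apply, hF_apply] at this
    linarith
  refine ⟨(-c)⁻¹ • φ, fun z => le_of_forall_gt_imp_ge_of_dense fun t ht => ?_⟩
  have := hF (z, t) ht
  rw [hF_apply, hF_apply] at this
  have key : (-c)⁻¹ * (φ z - φ x) ≤ t - σ x := by
    rw [inv_mul_le_iff₀ (neg_pos.2 hc)]
    linarith
  simp only [smul_apply, map_sub, smul_eq_mul]
  linarith

lemma norm_le_of_subgradient {σ : X → ℝ} {x : X} {p : X →L[ℝ] ℝ}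
    (hp : ∀ z, σ x + p (z - x) ≤ σ z) {s : Set X} (hs : s ∈ 𝓝 x) {ℓ : ℝ≥0}
    (hℓ : LipschitzOnWith ℓ σ s) : ‖p‖ ≤ ℓ := by
  refine ContinuousLinearMap.opNorm_le_of_nhds_zero ℓ.coe_nonneg ?_
  have hnear : ∀ᶠ u in 𝓝 (0 : X), x + u ∈ s ∧ x - u ∈ s :=
    (((continuous_const_add x).tendsto' 0 x (add_zero x)).eventually_mem hs).and
      (((continuous_sub_left x).tendsto' 0 x (sub_zero x)).eventually_mem hs)
  filter_upwards [hnear] with u ⟨hplus, hminus⟩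
  have h1 := hp (x + u)
  have h2 := hp (x - u)
  have l1 := (abs_le.1 (hℓ.norm_sub_le hplus (mem_of_mem_nhds hs))).2
  have l2 := (abs_le.1 (hℓ.norm_sub_le hminus (mem_of_mem_nhds hs))).2
  simp only [add_sub_cancel_left, sub_sub_cancel_left, map_neg, norm_neg] at h1 h2 l1 l2
  rw [Real.norm_eq_abs, abs_le]
  constructor <;> linarith

lemma hasFDerivAt_of_subgradient_of_le {σ : X → ℝ} {x : X} {p : X →L[ℝ] ℝ} {C α : ℝ}
    (hα : 0 < α) (hp : ∀ z, σ x + p (z - x) ≤ σ z)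
    (hup : ∀ h : X, ‖h‖ ≤ 1 → σ (x + h) ≤ σ x + p h + C * ‖h‖ ^ (1 + α)) :
    HasFDerivAt σ p x := by
  rw [hasFDerivAt_iff_isLittleO_nhds_zero]
  refine (IsBigO.of_bound C ?_).trans_isLittleO (isLittleO_norm_rpow_one_add hα)
  filter_upwards [closedBall_mem_nhds (0 : X) one_pos] with h hh
  have := hp (x + h)
  rw [add_sub_cancel_left] at this
  rw [Real.norm_eq_abs, abs_of_nonneg (by linarith), Real.norm_of_nonneg (by positivity)]
  linarith [hup h (mem_closedBall_zero_iff.1 hh)]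

lemma le_add_of_subgradient_of_secondDiff_le {σ : X → ℝ} {x h : X} {p : X →L[ℝ] ℝ} {E : ℝ}
    (hp : ∀ z, σ x + p (z - x) ≤ σ z) (hE : σ (x + h) + σ (x - h) - 2 * σ x ≤ E) :
    σ (x + h) ≤ σ x + p h + E := by
  have := hp (x - h)
  rw [sub_sub_cancel_left, map_neg] at this
  linarith

lemma norm_fderiv_sub_le_of_le {σ : X → ℝ} {C α r : ℝ} (hα : 0 ≤ α) (hC : 0 ≤ C)
    (hsub : ∀ z w, σ z + fderiv ℝ σ z (w - z) ≤ σ w)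
    (hup : ∀ z h : X, ‖z‖ ≤ r → ‖h‖ ≤ 1 →
      σ (z + h) ≤ σ z + fderiv ℝ σ z h + C * ‖h‖ ^ (1 + α))
    {x y : X} (hx : ‖x‖ ≤ r) (hy : ‖y‖ ≤ r) (hxy : ‖x - y‖ ≤ 1) :
    ‖fderiv ℝ σ x - fderiv ℝ σ y‖ ≤ 2 * C * ‖x - y‖ ^ α := by
  rcases eq_or_ne x y with rfl | hne
  · rw [sub_self, norm_zero]; positivity
  set d := ‖x - y‖
  have hd : 0 < d := norm_sub_pos_iff.2 hne
  -- the tangent plane at `y` lies below `σ`, which lies `C ‖·‖ ^ (1 + α)`-close above the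
  -- tangent planes at `x` and `y`
  have key : ∀ h : X, ‖h‖ ≤ d → (fderiv ℝ σ y - fderiv ℝ σ x) h ≤ 2 * C * d ^ (1 + α) := by
    intro h hh
    have h1 := hsub y (x + h)
    rw [show x + h - y = (x - y) + h by abel, map_add] at h1
    have h2 := hup x h hx (hh.trans hxy)
    have h3 := hup y (x - y) hy hxy
    rw [add_sub_cancel] at h3
    have h4 : C * ‖h‖ ^ (1 + α) ≤ C * d ^ (1 + α) := by gcongr
    rw [sub_apply]
    linarith
  rw [norm_sub_rev]
  refine (ContinuousLinearMap.opNorm_bound_of_ball_bound hd (2 * C * d ^ (1 + α)) _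
    fun h hh => ?_).trans_eq ?_
  · rw [mem_closedBall_zero_iff] at hh
    have := key (-h) (by rwa [norm_neg])
    rw [map_neg] at this
    rw [Real.norm_eq_abs, abs_le]
    exact ⟨by linarith, key h hh⟩
  · rw [Real.rpow_add hd, Real.rpow_one]
    field_simp

theorem ConvexOn.differentiable_and_holderFDerivOnBounded {σ : X → ℝ} {α : ℝ}
    (hσ : ConvexOn ℝ univ σ) (hlip : ∀ ρ, ∃ ℓ : ℝ≥0, LipschitzOnWith ℓ σ (ball 0 ρ))
    (hα : 0 < α) (hsd : SecondDiffHolderOnBounded α σ) :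
    Differentiable ℝ σ ∧ HolderFDerivOnBounded α σ := by
  have hderiv : ∀ x, ∃ p, HasFDerivAt σ p x ∧ ∀ z, σ x + p (z - x) ≤ σ z := fun x => by
    obtain ⟨p, hp⟩ := hσ.exists_subgradient (continuous_of_lipschitzOnWith_ball hlip) x
    obtain ⟨C, -, hC⟩ := hsd ‖x‖
    exact ⟨p, hasFDerivAt_of_subgradient_of_le hα hp fun h hh =>
      le_add_of_subgradient_of_secondDiff_le hp (hC x h le_rfl hh), hp⟩
  have hsub : ∀ z w, σ z + fderiv ℝ σ z (w - z) ≤ σ w := fun z => by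
    obtain ⟨p, hp, hsub⟩ := hderiv z
    rwa [hp.fderiv]
  refine ⟨fun x => (hderiv x).choose_spec.1.differentiableAt, fun r hr => ?_⟩
  obtain ⟨C, hC0, hC⟩ := hsd r
  obtain ⟨ℓ, hℓ⟩ := hlip (r + 1)
  have hbound : ∀ z : X, ‖z‖ ≤ r → ‖fderiv ℝ σ z‖ ≤ ℓ := fun z hz =>
    norm_fderiv_le_of_lipschitzOn ℝ (isOpen_ball.mem_nhds (by simp; linarith)) hℓ
  refine ⟨2 * C + 2 * ℓ + 1, by positivity, fun x y hx hy => ?_⟩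
  rcases le_or_gt ‖x - y‖ 1 with hxy | hxy
  · calc _ ≤ 2 * C * ‖x - y‖ ^ α := norm_fderiv_sub_le_of_le hα.le hC0 hsub
          (fun z h hz hh => le_add_of_subgradient_of_secondDiff_le (hsub z) (hC z h hz hh))
          hx hy hxy
      _ ≤ _ := by gcongr; linarith [ℓ.coe_nonneg]
  · calc _ ≤ ‖fderiv ℝ σ x‖ + ‖fderiv ℝ σ y‖ := norm_sub_le _ _
      _ ≤ (2 * C + 2 * ℓ + 1) * 1 := by linarith [hbound x hx, hbound y hy]
      _ ≤ _ := by gcongr; exact Real.one_le_rpow hxy.le hα.le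

end ConvexRegularity

section ConvexEnvelope

variable {X : Type*} [NormedAddCommGroup X] [NormedSpace ℝ X] {g b : X → ℝ}

lemma le_sum_of_convexOn_le (hb : ConvexOn ℝ univ b) (hbg : ∀ z, b z ≤ g z) {m : ℕ}
    (l : Fin m → ℝ) (z : Fin m → X) (hl : ∀ i, 0 < l i) (hsum : ∑ i, l i = 1) :
    b (∑ i, l i • z i) ≤ ∑ i, l i * g (z i) :=
  (hb.map_sum_le (fun i _ => (hl i).le) hsum fun _ _ => mem_univ _).trans
    (Finset.sum_le_sum fun i _ => mul_le_mul_of_nonneg_left (hbg _) (hl i).le)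

lemma convEnv_le_sum (hb : ConvexOn ℝ univ b) (hbg : ∀ z, b z ≤ g z) {m : ℕ}
    (l : Fin m → ℝ) (z : Fin m → X) (hl : ∀ i, 0 < l i) (hsum : ∑ i, l i = 1) :
    convEnv g (∑ i, l i • z i) ≤ ∑ i, l i * g (z i) := by
  refine csInf_le ⟨b (∑ i, l i • z i), ?_⟩ ⟨m, l, z, hl, hsum, rfl, rfl⟩
  rintro _ ⟨m', l', z', hl', hsum', hbar, rfl⟩
  rw [← hbar]
  exact le_sum_of_convexOn_le hb hbg l' z' hl' hsum'

lemma convEnv_le_self (hb : ConvexOn ℝ univ b) (hbg : ∀ z, b z ≤ g z) (x : X) :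
    convEnv g x ≤ g x := by
  simpa using convEnv_le_sum hb hbg (fun _ : Fin 1 => 1) (fun _ => x) (fun _ => one_pos) (by simp)

lemma le_convEnv (hb : ConvexOn ℝ univ b) (hbg : ∀ z, b z ≤ g z) (x : X) :
    b x ≤ convEnv g x := by
  refine le_csInf ⟨g x, 1, fun _ => 1, fun _ => x, fun _ => one_pos, by simp, by simp, by simp⟩ ?_
  rintro _ ⟨m, l, z, hl, hsum, rfl, rfl⟩
  exact le_sum_of_convexOn_le hb hbg l z hl hsum

lemma exists_sum_le_convEnv_add (x : X) {ε : ℝ} (hε : 0 < ε) :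
    ∃ (m : ℕ) (l : Fin m → ℝ) (z : Fin m → X), (∀ i, 0 < l i) ∧ ∑ i, l i = 1 ∧
      ∑ i, l i • z i = x ∧ ∑ i, l i * g (z i) ≤ convEnv g x + ε := by
  by_contra! H
  have : convEnv g x + ε ≤ convEnv g x := by
    refine le_csInf ⟨g x, 1, fun _ => 1, fun _ => x, fun _ => one_pos, by simp, by simp, by simp⟩ ?_
    rintro _ ⟨m, l, z, hl, hsum, hbar, rfl⟩
    exact (H m l z hl hsum hbar).le
  linarith

lemma convexOn_convEnv (hb : ConvexOn ℝ univ b) (hbg : ∀ z, b z ≤ g z) :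
    ConvexOn ℝ univ (convEnv g) := by
  refine ⟨convex_univ, fun x _ y _ a c ha hc hac => ?_⟩
  rcases ha.eq_or_lt with rfl | ha
  · simp [show c = 1 by linarith]
  rcases hc.eq_or_lt with rfl | hc
  · simp [show a = 1 by linarith]
  refine le_of_forall_pos_le_add fun ε hε => ?_
  obtain ⟨m₁, l₁, z₁, hl₁, hsum₁, rfl, hval₁⟩ := exists_sum_le_convEnv_add (g := g) x hε
  obtain ⟨m₂, l₂, z₂, hl₂, hsum₂, rfl, hval₂⟩ := exists_sum_le_convEnv_add (g := g) y hε
  have hl : ∀ i, 0 < Fin.append (a • l₁) (c • l₂) i := Fin.addCases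
    (fun i => by simpa using mul_pos ha (hl₁ i)) (fun i => by simpa using mul_pos hc (hl₂ i))
  have hsum : ∑ i, Fin.append (a • l₁) (c • l₂) i = 1 := by
    simp [Fin.sum_univ_add, ← Finset.mul_sum, hsum₁, hsum₂, hac]
  have := convEnv_le_sum hb hbg _ (Fin.append z₁ z₂) hl hsum
  simp only [Fin.sum_univ_add, Fin.append_left, Fin.append_right, Pi.smul_apply, smul_eq_mul,
    mul_smul, ← Finset.smul_sum, mul_assoc, ← Finset.mul_sum] at this
  calc _ ≤ _ := this
    _ ≤ a * (convEnv g (∑ i, l₁ i • z₁ i) + ε) + c * (convEnv g (∑ i, l₂ i • z₂ i) + ε) := by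
        gcongr
    _ = _ := by rw [smul_eq_mul, smul_eq_mul]; linear_combination ε * hac

lemma convEnv_add_add_convEnv_sub_le (hb : ConvexOn ℝ univ b) (hbg : ∀ z, b z ≤ g z) {m : ℕ}
    (l : Fin m → ℝ) (z : Fin m → X) (hl : ∀ i, 0 < l i) (hsum : ∑ i, l i = 1) (h : X) {E : ℝ}
    (hE : ∀ i, g (z i + h) + g (z i - h) - 2 * g (z i) ≤ E) :
    convEnv g (∑ i, l i • z i + h) + convEnv g (∑ i, l i • z i - h) ≤
      2 * ∑ i, l i * g (z i) + E := by
  have hshift : ∀ u, ∑ i, l i • (z i + u) = ∑ i, l i • z i + u := fun u => by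
    simp [smul_add, Finset.sum_add_distrib, ← Finset.sum_smul, hsum]
  have h1 := convEnv_le_sum hb hbg l (fun i => z i + h) hl hsum
  have h2 := convEnv_le_sum hb hbg l (fun i => z i + -h) hl hsum
  rw [hshift] at h1 h2
  simp only [← sub_eq_add_neg] at h2
  have h3 : ∑ i, l i * (g (z i + h) + g (z i - h) - 2 * g (z i)) ≤ ∑ i, l i * E :=
    Finset.sum_le_sum fun i _ => mul_le_mul_of_nonneg_left (hE i) (hl i).le
  simp only [mul_sub, mul_add, Finset.sum_add_distrib, Finset.sum_sub_distrib, ← Finset.sum_mul,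
    hsum, mul_left_comm _ (2 : ℝ), ← Finset.mul_sum] at h3
  linarith

end ConvexEnvelope

section Localization

variable {X : Type*} [NormedAddCommGroup X] [NormedSpace ℝ X] {g b : X → ℝ}

lemma convEnv_lipschitzOnWith (hb : ConvexOn ℝ univ b) (hbg : ∀ z, b z ≤ g z)
    (hb0 : ∃ C, ∀ z, -C ≤ b z) (hgbdd : ∀ ρ, ∃ G, ∀ z : X, ‖z‖ ≤ ρ → g z ≤ G) (ρ : ℝ) :
    ∃ ℓ : ℝ≥0, LipschitzOnWith ℓ (convEnv g) (ball 0 ρ) := by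
  obtain ⟨C, hC⟩ := hb0
  obtain ⟨G, hG⟩ := hgbdd (ρ + 1)
  have hψ := ((convexOn_convEnv hb hbg).subset (subset_univ _) (convex_ball (0 : X) (ρ + 1)))
  have hM : ∀ a, dist a 0 < ρ + 1 → |convEnv g a| ≤ max G C := fun a ha => by
    rw [dist_zero_right] at ha
    rw [abs_le]
    constructor
    · linarith [hC a, le_convEnv hb hbg a, le_max_right G C]
    · linarith [convEnv_le_self hb hbg a, hG a ha.le, le_max_left G C]
  exact ⟨_, by simpa using hψ.lipschitzOnWith_of_abs_le one_pos hM⟩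

lemma sum_mul_bregman_le {ψ : X → ℝ} (hψg : ∀ z, ψ z ≤ g z) (p : X →L[ℝ] ℝ) {x : X} {ε : ℝ}
    {m : ℕ} {l : Fin m → ℝ} {z : Fin m → X} (hl : ∀ i, 0 ≤ l i) (hsum : ∑ i, l i = 1)
    (hbar : ∑ i, l i • z i = x) (hval : ∑ i, l i * g (z i) ≤ ψ x + ε) :
    ∑ i, l i * (ψ (z i) - ψ x - p (z i - x)) ≤ ε := by
  have hp : ∑ i, l i * p (z i - x) = 0 := by
    simp_rw [← smul_eq_mul, ← map_smul, ← map_sum, smul_sub, Finset.sum_sub_distrib,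
      ← Finset.sum_smul, hsum, one_smul, hbar, sub_self, map_zero]
  have hψ : ∑ i, l i * ψ (z i) ≤ ∑ i, l i * g (z i) :=
    Finset.sum_le_sum fun i _ => mul_le_mul_of_nonneg_left (hψg _) (hl i)
  simp only [mul_sub, Finset.sum_sub_distrib, ← Finset.sum_mul, hsum, hp]
  linarith

lemma norm_le_bregman_of_lt_norm {ψ : X → ℝ} {x z : X} {p : X →L[ℝ] ℝ} {ℓ C : ℝ}
    (hpℓ : ‖p‖ ≤ ℓ) (hC : (ℓ + 2) * ‖z‖ - C ≤ ψ z) (hz : C + ψ x + ℓ * ‖x‖ < ‖z‖) :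
    ‖z‖ ≤ ψ z - ψ x - p (z - x) := by
  have : p (z - x) ≤ ℓ * (‖z‖ + ‖x‖) :=
    (le_abs_self _).trans ((p.le_opNorm _).trans
      (mul_le_mul hpℓ (norm_sub_le _ _) (norm_nonneg _) ((norm_nonneg _).trans hpℓ)))
  linarith

lemma sum_mul_le_mul_of_le_mul {m : ℕ} {l a D : Fin m → ℝ} {k ε : ℝ} (hl : ∀ i, 0 ≤ l i)
    (hk : 0 ≤ k) (hD : ∑ i, l i * D i ≤ ε) (ha : ∀ i, a i ≤ k * D i) :
    ∑ i, l i * a i ≤ k * ε :=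
  calc ∑ i, l i * a i ≤ ∑ i, l i * (k * D i) :=
        Finset.sum_le_sum fun i _ => mul_le_mul_of_nonneg_left (ha i) (hl i)
    _ = k * ∑ i, l i * D i := by
        rw [Finset.mul_sum]
        exact Finset.sum_congr rfl fun i _ => by ring
    _ ≤ k * ε := by gcongr

/-- Points `z i` of norm `> ρ₀` are replaced by `x`; the weights `D i` pay for the move. -/
lemma exists_replace_far {m : ℕ} {l D : Fin m → ℝ} {z : Fin m → X} {x : X} {ρ₀ r ε G C : ℝ}
    (hl : ∀ i, 0 ≤ l i) (hbar : ∑ i, l i • z i = x) (hD0 : ∀ i, 0 ≤ D i)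
    (hD : ∑ i, l i * D i ≤ ε) (hfar : ∀ i, ρ₀ < ‖z i‖ → 1 ≤ D i ∧ ‖z i‖ ≤ D i) (hr : 0 ≤ r)
    (hx : ‖x‖ ≤ r) (hGC : 0 ≤ G + C) (hgx : g x ≤ G) (hgC : ∀ z, -C ≤ g z) :
    ∃ z' : Fin m → X, (∀ i, ‖z' i‖ ≤ max r ρ₀) ∧ ‖∑ i, l i • z' i - x‖ ≤ (r + 1) * ε ∧
      ∑ i, l i * g (z' i) ≤ ∑ i, l i * g (z i) + (G + C) * ε := by
  set z' := fun i => if ρ₀ < ‖z i‖ then x else z i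
  have hmove : ∀ i, ‖z' i - z i‖ ≤ (r + 1) * D i := fun i => by
    by_cases hi : ρ₀ < ‖z i‖
    · obtain ⟨h1, h2⟩ := hfar i hi
      simp only [z', if_pos hi]
      nlinarith [norm_sub_le x (z i)]
    · simp only [z', if_neg hi, sub_self, norm_zero]
      exact mul_nonneg (by linarith) (hD0 i)
  have hgain : ∀ i, g (z' i) - g (z i) ≤ (G + C) * D i := fun i => by
    by_cases hi : ρ₀ < ‖z i‖
    · simp only [z', if_pos hi]
      nlinarith [hgC (z i), (hfar i hi).1]
    · simp only [z', if_neg hi, sub_self]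
      exact mul_nonneg hGC (hD0 i)
  refine ⟨z', fun i => ?_, ?_, ?_⟩
  · by_cases hi : ρ₀ < ‖z i‖
    · simp only [z', if_pos hi]
      exact hx.trans (le_max_left _ _)
    · simp only [z', if_neg hi]
      exact (not_lt.1 hi).trans (le_max_right _ _)
  · calc ‖∑ i, l i • z' i - x‖ = ‖∑ i, l i • (z' i - z i)‖ := by
          simp [smul_sub, Finset.sum_sub_distrib, hbar]
      _ ≤ ∑ i, l i * ‖z' i - z i‖ := (norm_sum_le _ _).trans_eq
          (Finset.sum_congr rfl fun i _ => by rw [norm_smul, Real.norm_of_nonneg (hl i)])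
      _ ≤ (r + 1) * ε := sum_mul_le_mul_of_le_mul hl (by linarith) hD hmove
  · have := sum_mul_le_mul_of_le_mul hl hGC hD hgain
    simp only [mul_sub, Finset.sum_sub_distrib] at this
    linarith

/-- In an `ε`-optimal combination for `convEnv g x`, superlinearity of `b` makes the points
outside a large ball carry total Bregman weight at most `ε`. -/
lemma exists_localized_combination (hb : ConvexOn ℝ univ b) (hbg : ∀ z, b z ≤ g z)
    (hsuper : ∀ s, ∃ C, ∀ z, s * ‖z‖ - C ≤ b z) (hgbdd : ∀ ρ, ∃ G, ∀ z : X, ‖z‖ ≤ ρ → g z ≤ G)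
    {r : ℝ} (hr : 0 ≤ r) :
    ∃ ρ c : ℝ, 0 ≤ c ∧ ∀ x : X, ‖x‖ ≤ r → ∀ ε > 0,
      ∃ (m : ℕ) (l : Fin m → ℝ) (z : Fin m → X), (∀ i, 0 < l i) ∧ ∑ i, l i = 1 ∧
        (∀ i, ‖z i‖ ≤ ρ) ∧ ‖∑ i, l i • z i - x‖ ≤ c * ε ∧
        ∑ i, l i * g (z i) ≤ convEnv g x + c * ε := by
  have hb0 : ∃ C, ∀ z, -C ≤ b z := (hsuper 0).imp fun C hC z => by simpa using hC z
  obtain ⟨ℓ, hℓ⟩ := convEnv_lipschitzOnWith hb hbg hb0 hgbdd (r + 1)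
  obtain ⟨C, hC⟩ := hsuper (ℓ + 2)
  obtain ⟨G, hG⟩ := hgbdd r
  have hgC : ∀ z, -C ≤ g z := fun z => by
    have := mul_nonneg (by positivity : (0 : ℝ) ≤ ℓ + 2) (norm_nonneg z)
    linarith [hC z, hbg z]
  have hGC : 0 ≤ G + C := by linarith [hgC 0, hG 0 (by simpa using hr)]
  set ρ₀ := max 1 (C + G + ℓ * r)
  refine ⟨max r ρ₀, r + 1 + G + C, by linarith, fun x hx ε hε => ?_⟩
  obtain ⟨p, hp⟩ := (convexOn_convEnv hb hbg).exists_subgradient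
    (continuous_of_lipschitzOnWith_ball (convEnv_lipschitzOnWith hb hbg hb0 hgbdd)) x
  have hpℓ : ‖p‖ ≤ ℓ := norm_le_of_subgradient hp (isOpen_ball.mem_nhds (by simp; linarith)) hℓ
  obtain ⟨m, l, z, hl, hsum, hbar, hval⟩ := exists_sum_le_convEnv_add (g := g) x hε
  set D := fun i => convEnv g (z i) - convEnv g x - p (z i - x)
  have hfar : ∀ i, ρ₀ < ‖z i‖ → 1 ≤ D i ∧ ‖z i‖ ≤ D i := fun i hi => by
    have hψx : convEnv g x ≤ G := (convEnv_le_self hb hbg x).trans (hG x hx)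
    have hℓx : ℓ * ‖x‖ ≤ ℓ * r := mul_le_mul_of_nonneg_left hx ℓ.coe_nonneg
    have := norm_le_bregman_of_lt_norm hpℓ ((hC (z i)).trans (le_convEnv hb hbg _))
      (by linarith [le_max_right 1 (C + G + ℓ * r)])
    exact ⟨by linarith [le_max_left 1 (C + G + ℓ * r)], this⟩
  obtain ⟨z', hz'ρ, hz'x, hz'g⟩ := exists_replace_far (fun i => (hl i).le) hbar
    (fun i => by linarith [hp (z i)])
    (sum_mul_bregman_le (convEnv_le_self hb hbg) p (fun i => (hl i).le) hsum hbar hval)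
    hfar hr hx hGC (hG x hx) hgC
  refine ⟨m, l, z', hl, hsum, hz'ρ, hz'x.trans ?_, by nlinarith⟩
  exact mul_le_mul_of_nonneg_right (by linarith) hε.le

end Localization

theorem secondDiffHolderOnBounded_convEnv {X : Type*} [NormedAddCommGroup X] [NormedSpace ℝ X]
    {g b : X → ℝ} {α : ℝ} (hα : 0 < α) (hb : ConvexOn ℝ univ b) (hbg : ∀ z, b z ≤ g z)
    (hsuper : ∀ s, ∃ C, ∀ z, s * ‖z‖ - C ≤ b z) (hgbdd : ∀ ρ, ∃ G, ∀ z : X, ‖z‖ ≤ ρ → g z ≤ G)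
    (hg : SecondDiffHolderOnBounded α g) : SecondDiffHolderOnBounded α (convEnv g) := by
  intro r
  set r' := max r 0
  have hb0 : ∃ C, ∀ z, -C ≤ b z := (hsuper 0).imp fun C hC z => by simpa using hC z
  obtain ⟨ρ, c, hc, hloc⟩ := exists_localized_combination hb hbg hsuper hgbdd (le_max_right r 0)
  obtain ⟨ℓ, hℓ⟩ := convEnv_lipschitzOnWith hb hbg hb0 hgbdd (r' + c + 2)
  obtain ⟨E, hE0, hE⟩ := hg ρ
  refine ⟨2 * ℓ * c + 2 * c + E, by positivity, fun x h hx hh => ?_⟩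
  replace hx : ‖x‖ ≤ r' := hx.trans (le_max_left _ _)
  rcases eq_or_ne h 0 with rfl | hne
  · simp only [add_zero, sub_zero, norm_zero, Real.zero_rpow (by positivity : 1 + α ≠ 0)]
    linarith
  -- localize with error `ε = ‖h‖ ^ (1 + α)`, the order of the bound sought
  set ε := ‖h‖ ^ (1 + α)
  have hε : 0 < ε := Real.rpow_pos_of_pos (norm_pos_iff.2 hne) _
  have hε1 : ε ≤ 1 := Real.rpow_le_one (norm_nonneg _) hh (by linarith)
  obtain ⟨m, l, z, hl, hsum, hzρ, hmove, hval⟩ := hloc x hx ε hε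
  set x' := ∑ i, l i • z i
  have hsd := convEnv_add_add_convEnv_sub_le hb hbg l z hl hsum h fun i => hE (z i) h (hzρ i) hh
  have hshift : ∀ u : X, ‖u‖ ≤ 1 →
      convEnv g (x + u) ≤ convEnv g (x' + u) + ℓ * (c * ε) := fun u hu => by
    have hcε : c * ε ≤ c := mul_le_of_le_one_right hc hε1
    have hxu : ‖x + u‖ < r' + c + 2 := by linarith [norm_add_le x u]
    have hx'u : ‖x' + u‖ < r' + c + 2 := by
      rw [show x' + u = (x' - x) + (x + u) by abel]
      linarith [norm_add_le (x' - x) (x + u), norm_add_le x u]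
    have := (abs_le.1 (hℓ.norm_sub_le (mem_ball_zero_iff.2 hxu) (mem_ball_zero_iff.2 hx'u))).2
    rw [add_sub_add_right_eq_sub, norm_sub_rev] at this
    linarith [mul_le_mul_of_nonneg_left hmove ℓ.coe_nonneg]
  have h1 := hshift h hh
  have h2 := hshift (-h) (by rwa [norm_neg])
  simp only [← sub_eq_add_neg] at h2
  have : (2 * ℓ * c + 2 * c + E) * ε = 2 * (ℓ * (c * ε)) + 2 * (c * ε) + E * ε := by ring
  linarith

theorem differentiable_and_holderFDerivOnBounded_convEnv {X : Type*} [NormedAddCommGroup X]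
    [NormedSpace ℝ X] {g b : X → ℝ} {α : ℝ} (hα : 0 < α) (hb : ConvexOn ℝ univ b)
    (hbg : ∀ z, b z ≤ g z) (hsuper : ∀ s, ∃ C, ∀ z, s * ‖z‖ - C ≤ b z)
    (hgbdd : ∀ ρ, ∃ G, ∀ z : X, ‖z‖ ≤ ρ → g z ≤ G) (hg : SecondDiffHolderOnBounded α g) :
    Differentiable ℝ (convEnv g) ∧ HolderFDerivOnBounded α (convEnv g) :=
  (convexOn_convEnv hb hbg).differentiable_and_holderFDerivOnBounded
    (convEnv_lipschitzOnWith hb hbg ((hsuper 0).imp fun C hC z => by simpa using hC z) hgbdd) hα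
    (secondDiffHolderOnBounded_convEnv hα hb hbg hsuper hgbdd hg)

section Kernel

variable {X : Type*} [NormedAddCommGroup X] [NormedSpace ℝ X]

/-- `c` is the supremum of the convex functions `d (·, y)`, attained at `y = x`. -/
lemma convexOn_of_kernel_eq_sub {K : X → X → ℝ} {c : X → ℝ} {d : X → X → ℝ}
    (hK0 : ∀ x y, 0 ≤ K x y) (hKdiag : ∀ x, K x x = 0) (hKcd : ∀ x y, K x y = c x - d x y)
    (hd : ∀ y, ConvexOn ℝ univ fun x => d x y) : ConvexOn ℝ univ c := by
  refine ⟨convex_univ, fun x _ y _ a b ha hb hab => ?_⟩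
  set w := a • x + b • y
  have hw : c w = d w w := by linarith [hKdiag w, hKcd w w]
  have hdw : d w w ≤ a * d x w + b * d y w := (hd w).2 (mem_univ x) (mem_univ y) ha hb hab
  have hx : d x w ≤ c x := by linarith [hK0 x w, hKcd x w]
  have hy : d y w ≤ c y := by linarith [hK0 y w, hKcd y w]
  rw [smul_eq_mul, smul_eq_mul, hw]
  nlinarith [mul_le_mul_of_nonneg_left hx ha, mul_le_mul_of_nonneg_left hy hb]

lemma ConvexOn.superlinear_of_coercive {σ : X → ℝ} (hσ : ConvexOn ℝ univ σ)
    (hc : Continuous σ) (hcoer : ∀ M : ℝ, ∃ R : ℝ, ∀ x : X, R ≤ ‖x‖ → M ≤ σ x / ‖x‖) (s : ℝ) :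
    ∃ C, ∀ z, s * ‖z‖ - C ≤ σ z := by
  obtain ⟨p, hp⟩ := hσ.exists_subgradient hc 0
  obtain ⟨R, hR⟩ := hcoer s
  set R' := max R 1
  refine ⟨max 0 ((|s| + ‖p‖) * R' - σ 0), fun z => ?_⟩
  have hC0 := le_max_left 0 ((|s| + ‖p‖) * R' - σ 0)
  have hC := le_max_right 0 ((|s| + ‖p‖) * R' - σ 0)
  rcases le_or_gt R' ‖z‖ with hz | hz
  · have hz0 : 0 < ‖z‖ := by linarith [le_max_right R 1]
    have := hR z ((le_max_left R 1).trans hz)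
    rw [le_div_iff₀ hz0] at this
    linarith
  · have h1 := hp z
    rw [sub_zero] at h1
    have h2 := (abs_le.1 (p.le_opNorm z)).1
    have h3 : s * ‖z‖ ≤ |s| * R' :=
      (mul_le_mul_of_nonneg_right (le_abs_self s) (norm_nonneg z)).trans (by gcongr)
    have h4 : ‖p‖ * ‖z‖ ≤ ‖p‖ * R' := by gcongr
    linarith

lemma UniformContinuousOn.exists_le_of_closedBall {φ : X → ℝ} {ρ : ℝ}
    (hφ : UniformContinuousOn φ (closedBall 0 ρ)) : ∃ B, ∀ z : X, ‖z‖ ≤ ρ → φ z ≤ B := by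
  obtain ⟨δ, hδ, hδφ⟩ := Metric.uniformContinuousOn_iff.1 hφ 1 one_pos
  obtain ⟨N, hN⟩ := exists_nat_gt (|ρ| / δ)
  have hN0 : (0 : ℝ) < N := lt_of_le_of_lt (by positivity) hN
  refine ⟨φ 0 + N, fun z hz => ?_⟩
  set w : ℕ → X := fun k => ((k : ℝ) / N) • z
  have hw : ∀ k ≤ N, w k ∈ closedBall 0 ρ := fun k hk => by
    rw [mem_closedBall_zero_iff, norm_smul, Real.norm_of_nonneg (by positivity)]
    exact (mul_le_of_le_one_left (norm_nonneg z)
      ((div_le_one hN0).2 (by exact_mod_cast hk))).trans hz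
  have hstep : ∀ k < N, φ (w (k + 1)) - φ (w k) ≤ 1 := fun k hk => by
    refine (le_abs_self _).trans (hδφ _ (hw _ hk) _ (hw _ hk.le) ?_).le
    rw [dist_eq_norm, ← sub_smul, norm_smul, Real.norm_of_nonneg (by push_cast; field_simp; simp)]
    calc ((k + 1 : ℕ) / N - k / N : ℝ) * ‖z‖ = ‖z‖ / N := by push_cast; field_simp; ring
      _ ≤ |ρ| / N := by gcongr; exact hz.trans (le_abs_self ρ)
      _ < δ := by rwa [div_lt_iff₀ hN0, mul_comm, ← div_lt_iff₀ hδ]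
  have htel := Finset.sum_range_sub (fun k => φ (w k)) N
  have hsum : ∑ k ∈ Finset.range N, (φ (w (k + 1)) - φ (w k)) ≤ N := by
    simpa using Finset.sum_le_sum fun k hk => hstep k (Finset.mem_range.1 hk)
  simp only [w, div_self hN0.ne', one_smul, CharP.cast_eq_zero, zero_div, zero_smul] at htel
  linarith

end Kernel

section InfConvolution

variable {X : Type*} [NormedAddCommGroup X] {K : X → X → ℝ} {f : X → EReal} {m : ℝ} (n : ℕ)

lemma infConvK_ne_top {y₀ : X} (hy₀ : f y₀ ≠ ⊤) (x : X) : infConvK K f n x ≠ ⊤ :=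
  ((iInf_le _ y₀).trans_lt (EReal.add_lt_top hy₀ (EReal.coe_ne_top _))).ne

lemma le_infConvK (hK0 : ∀ x y, 0 ≤ K x y) (hm : ∀ y, (m : EReal) ≤ f y) (x : X) :
    (m : EReal) ≤ infConvK K f n x :=
  le_iInf fun y => by
    simpa using add_le_add (hm y) (EReal.coe_nonneg.2 (mul_nonneg n.cast_nonneg (hK0 x y)))

lemma coe_toReal_of_le {a : EReal} (ha : (m : EReal) ≤ a) (ha' : a ≠ ⊤) : (a.toReal : EReal) = a :=
  EReal.coe_toReal ha' (ne_bot_of_le_ne_bot (EReal.coe_ne_bot m) ha)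

variable (hK0 : ∀ x y, 0 ≤ K x y) (hm : ∀ y, (m : EReal) ≤ f y)
include hK0 hm

lemma le_infConvK_toReal {y₀ : X} (hy₀ : f y₀ ≠ ⊤) (x : X) : m ≤ (infConvK K f n x).toReal := by
  simpa using EReal.toReal_le_toReal (le_infConvK n hK0 hm x) (EReal.coe_ne_bot m)
    (infConvK_ne_top n hy₀ x)

lemma infConvK_toReal_le {y : X} (hy : f y ≠ ⊤) (x : X) :
    (infConvK K f n x).toReal ≤ (f y).toReal + n * K x y := by
  have h : infConvK K f n x ≤ (((f y).toReal + n * K x y : ℝ) : EReal) := by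
    rw [EReal.coe_add, coe_toReal_of_le (hm y) hy]
    exact iInf_le _ y
  have := EReal.toReal_le_toReal h
    (ne_bot_of_le_ne_bot (EReal.coe_ne_bot m) (le_infConvK n hK0 hm x)) (EReal.coe_ne_top _)
  rwa [EReal.toReal_coe] at this

lemma exists_le_infConvK_toReal_add {y₀ : X} (hy₀ : f y₀ ≠ ⊤) (x : X) {ε : ℝ} (hε : 0 < ε) :
    ∃ y, f y ≠ ⊤ ∧ (f y).toReal + n * K x y ≤ (infConvK K f n x).toReal + ε := by
  have hlt : infConvK K f n x < (((infConvK K f n x).toReal + ε : ℝ) : EReal) := by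
    rw [← coe_toReal_of_le (le_infConvK n hK0 hm x) (infConvK_ne_top n hy₀ x)]
    exact_mod_cast (by simpa using hε)
  obtain ⟨y, hy⟩ := iInf_lt_iff.1 hlt
  have hytop : f y ≠ ⊤ := fun h => by
    rw [h, EReal.top_add_coe] at hy
    exact not_top_lt hy
  refine ⟨y, hytop, ?_⟩
  rw [← coe_toReal_of_le (hm y) hytop, ← EReal.coe_add] at hy
  exact (EReal.coe_lt_coe_iff.1 hy).le

end InfConvolution

section InfConvolutionRegularity

variable {X : Type*} [NormedAddCommGroup X] [NormedSpace ℝ X] {K : X → X → ℝ} {cK : X → ℝ}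
  {dK : X → X → ℝ} {f : X → EReal} {m : ℝ} {y₀ : X} (n : ℕ)
  (hK0 : ∀ x y, 0 ≤ K x y) (hm : ∀ y, (m : EReal) ≤ f y) (hy₀ : f y₀ ≠ ⊤)
include hK0 hm hy₀

/-- Testing `I(z ± h)` with a near-minimizer `y` for `I z` leaves the second difference of
`K (·, y) = cK - dK (·, y)`, and `dK (·, y)` is convex. -/
lemma infConvK_secondDiff_le (hKcd : ∀ x y, K x y = cK x - dK x y)
    (hd : ∀ y, ConvexOn ℝ univ fun x => dK x y) (z h : X) :
    (infConvK K f n (z + h)).toReal + (infConvK K f n (z - h)).toReal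
      - 2 * (infConvK K f n z).toReal ≤ n * (cK (z + h) + cK (z - h) - 2 * cK z) := by
  refine le_of_forall_pos_le_add fun ε hε => ?_
  obtain ⟨y, hy, hyz⟩ := exists_le_infConvK_toReal_add n hK0 hm hy₀ z (half_pos hε)
  have h1 := infConvK_toReal_le n hK0 hm hy (z + h)
  have h2 := infConvK_toReal_le n hK0 hm hy (z - h)
  have hmid : dK z y ≤ 2⁻¹ * dK (z + h) y + 2⁻¹ * dK (z - h) y := by
    have := (hd y).2 (mem_univ (z + h)) (mem_univ (z - h)) (by norm_num : (0 : ℝ) ≤ 2⁻¹)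
      (by norm_num : (0 : ℝ) ≤ 2⁻¹) (by norm_num)
    rwa [show (2⁻¹ : ℝ) • (z + h) + (2⁻¹ : ℝ) • (z - h) = z by module] at this
  have hK : K (z + h) y + K (z - h) y - 2 * K z y ≤ cK (z + h) + cK (z - h) - 2 * cK z := by
    rw [hKcd, hKcd, hKcd]
    linarith
  nlinarith [mul_le_mul_of_nonneg_left hK n.cast_nonneg]

lemma secondDiffHolderOnBounded_infConvK_add {α : ℝ} (hKcd : ∀ x y, K x y = cK x - dK x y)
    (hd : ∀ y, ConvexOn ℝ univ fun x => dK x y) (hc : SecondDiffHolderOnBounded α cK) :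
    SecondDiffHolderOnBounded α fun z => (infConvK K f n z).toReal + n * cK z := by
  intro r
  obtain ⟨C, hC0, hC⟩ := hc r
  refine ⟨2 * n * C, by positivity, fun x h hx hh => ?_⟩
  have := infConvK_secondDiff_le n hK0 hm hy₀ hKcd hd x h
  have := mul_le_mul_of_nonneg_left (hC x h hx hh) (by positivity : (0 : ℝ) ≤ 2 * n)
  linarith

lemma exists_infConvK_add_le
    (hK4 : ∀ s : Set (X × X), Bornology.IsBounded s →
      UniformContinuousOn (fun q : X × X => K q.1 q.2) s)
    (hcK : ∀ ρ, ∃ B, ∀ z : X, ‖z‖ ≤ ρ → cK z ≤ B) (ρ : ℝ) :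
    ∃ G, ∀ z : X, ‖z‖ ≤ ρ → (infConvK K f n z).toReal + n * cK z ≤ G := by
  have hKy : UniformContinuousOn (fun z => K z y₀) (closedBall 0 ρ) :=
    (hK4 _ (isBounded_closedBall.prod Bornology.isBounded_singleton)).comp
      (uniformContinuous_id.prodMk uniformContinuous_const).uniformContinuousOn
      fun z hz => ⟨hz, rfl⟩
  obtain ⟨B₁, hB₁⟩ := hKy.exists_le_of_closedBall
  obtain ⟨B₂, hB₂⟩ := hcK ρ
  refine ⟨(f y₀).toReal + n * B₁ + n * B₂, fun z hz => ?_⟩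
  have := infConvK_toReal_le n hK0 hm hy₀ z
  have := mul_le_mul_of_nonneg_left (hB₁ z hz) n.cast_nonneg
  have := mul_le_mul_of_nonneg_left (hB₂ z hz) n.cast_nonneg
  linarith

end InfConvolutionRegularity

theorem stmt_16_general {X : Type*} [NormedAddCommGroup X] [NormedSpace ℝ X]
    (K : X → X → ℝ) (cK : X → ℝ) (dK : X → X → ℝ)
    (hK1 : (∀ x y : X, 0 ≤ K x y) ∧ ∀ x : X, K x x = 0)
    (hK4 : ∀ s : Set (X × X), Bornology.IsBounded s →
      UniformContinuousOn (fun q : X × X => K q.1 q.2) s)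
    (hK5 : (∀ x y : X, K x y = cK x - dK x y) ∧
      ∀ y : X, LowerSemicontinuous (fun x => dK x y) ∧
        ConvexOn ℝ Set.univ (fun x => dK x y))
    (f : X → EReal)
    (hproper : ∃ x, f x ≠ ⊤)
    (hbdd : ∃ m : ℝ, ∀ x, (m : EReal) ≤ f x)
    (α : ℝ) (hα0 : 0 < α)
    (hcdiff : Differentiable ℝ cK)
    (hchold : ∀ r : ℝ, 0 < r → ∃ L : ℝ, 0 < L ∧ ∀ x y : X, ‖x‖ ≤ r → ‖y‖ ≤ r →
      ‖fderiv ℝ cK x - fderiv ℝ cK y‖ ≤ L * ‖x - y‖ ^ α)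
    (hcoer : ∀ M : ℝ, ∃ R : ℝ, ∀ x : X, R ≤ ‖x‖ → M ≤ cK x / ‖x‖)
    (n : ℕ) (hn : 0 < n) :
    Differentiable ℝ (DeltaK K cK f n) ∧
    ∀ r : ℝ, 0 < r → ∃ L : ℝ, 0 < L ∧ ∀ x y : X, ‖x‖ ≤ r → ‖y‖ ≤ r →
      ‖fderiv ℝ (DeltaK K cK f n) x - fderiv ℝ (DeltaK K cK f n) y‖ ≤
        L * ‖x - y‖ ^ α := by
  obtain ⟨hK0, hKdiag⟩ := hK1
  obtain ⟨hKcd, hd⟩ := hK5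
  obtain ⟨m, hm⟩ := hbdd
  obtain ⟨y₀, hy₀⟩ := hproper
  have hc : ConvexOn ℝ univ cK := convexOn_of_kernel_eq_sub hK0 hKdiag hKcd fun y => (hd y).2
  have hn' : (0 : ℝ) < n := by exact_mod_cast hn
  have hsuper : ∀ s, ∃ C, ∀ z, s * ‖z‖ - C ≤ m + n * cK z := fun s => by
    obtain ⟨C, hC⟩ := hc.superlinear_of_coercive hcdiff.continuous hcoer (s / n)
    refine ⟨n * C - m, fun z => ?_⟩
    have := mul_le_mul_of_nonneg_left (hC z) hn'.le
    rw [mul_sub, ← mul_assoc, mul_div_cancel₀ s hn'.ne'] at this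
    linarith
  have hb : ConvexOn ℝ univ fun z => m + n * cK z :=
    (convexOn_const m convex_univ).add (hc.smul n.cast_nonneg)
  obtain ⟨hψ, hψ'⟩ := differentiable_and_holderFDerivOnBounded_convEnv hα0 hb
    (fun z => by linarith [le_infConvK_toReal n hK0 hm hy₀ z]) hsuper
    (exists_infConvK_add_le n hK0 hm hy₀ hK4
      (HolderFDerivOnBounded.exists_le hcdiff hα0.le hchold))
    (secondDiffHolderOnBounded_infConvK_add n hK0 hm hy₀ hKcd (fun y => (hd y).2)
      (HolderFDerivOnBounded.secondDiffHolderOnBounded hcdiff hα0.le hchold))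
  exact ⟨hψ.sub (hcdiff.const_mul _), hψ'.sub_const_mul hψ hcdiff hchold n⟩

/-- Let `K` be a kernel satisfying conditions (1)–(5) (with `K(x,y) = c_K(x) − d_K(x,y)`,
where `d_K(·,y)` is lower semicontinuous and convex), and let `f` be proper, lower
semicontinuous and bounded below. If `c_K` is Fréchet differentiable with derivative
`α`-Hölder continuous on every bounded set (`0 < α ≤ 1`) and `c_K` is strongly coercive,
then each `Δ_{K,n} f` is Fréchet differentiable with derivative `α`-Hölder continuous on
every bounded subset of `X`. -/
theorem stmt_16 {X : Type*} [NormedAddCommGroup X] [NormedSpace ℝ X] [CompleteSpace X]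
    (K : X → X → ℝ) (cK : X → ℝ) (dK : X → X → ℝ)
    (hK1 : (∀ x y : X, 0 ≤ K x y) ∧ ∀ x : X, K x x = 0)
    (hK2 : ∀ x y : X, K x y = K y x)
    (hK3 : ∀ r M : ℝ, 0 < r → 0 < M → ∃ R : ℝ, ∀ x y : X, ‖x‖ ≤ r → R ≤ ‖y‖ → M ≤ K x y)
    (hK4 : ∀ s : Set (X × X), Bornology.IsBounded s →
      UniformContinuousOn (fun q : X × X => K q.1 q.2) s)
    (hK5 : (∀ x y : X, K x y = cK x - dK x y) ∧
      ∀ y : X, LowerSemicontinuous (fun x => dK x y) ∧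
        ConvexOn ℝ Set.univ (fun x => dK x y))
    (f : X → EReal)
    (hproper : ∃ x, f x ≠ ⊤)
    (hlsc : LowerSemicontinuous f)
    (hbdd : ∃ m : ℝ, ∀ x, (m : EReal) ≤ f x)
    (α : ℝ) (hα0 : 0 < α) (hα1 : α ≤ 1)
    (hcdiff : Differentiable ℝ cK)
    (hchold : ∀ r : ℝ, 0 < r → ∃ L : ℝ, 0 < L ∧ ∀ x y : X, ‖x‖ ≤ r → ‖y‖ ≤ r →
      ‖fderiv ℝ cK x - fderiv ℝ cK y‖ ≤ L * ‖x - y‖ ^ α)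
    (hcoer : ∀ M : ℝ, ∃ R : ℝ, ∀ x : X, R ≤ ‖x‖ → M ≤ cK x / ‖x‖)
    (n : ℕ) (hn : 0 < n) :
    Differentiable ℝ (DeltaK K cK f n) ∧
    ∀ r : ℝ, 0 < r → ∃ L : ℝ, 0 < L ∧ ∀ x y : X, ‖x‖ ≤ r → ‖y‖ ≤ r →
      ‖fderiv ℝ (DeltaK K cK f n) x - fderiv ℝ (DeltaK K cK f n) y‖ ≤
        L * ‖x - y‖ ^ α :=
  stmt_16_general K cK dK hK1 hK4 hK5 f hproper hbdd α hα0 hcdiff hchold hcoer n hn
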